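/- Let T be any linear map on d × d complex matrices, and let ρ = (id ⊗ T)(|ψ⟩⟨ψ|) be the result of applying T to the second tensor factor of the projector onto ψ. Then tr(ρ Q) = (1/d) Σ_{α=1}^d tr(T(|ψ_α⟩⟨ψ_α|) · |ψ_α⟩⟨ψ_α|), where Q = Σ_{α=1}^d |â_α⟩⟨â_α| ⊗ |ψ_α⟩⟨ψ_α|. -/
import Mathlib


open Matrix Kronecker
open scoped BigOperators ComplexOrder

noncomputable section

/-- Standard basis vector `e_j` of `ℂ^d`. -/
def eVec (d : ℕ) (j : Fin d) : Fin d → ℂ := fun k => if k = j then 1 else 0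

/-- Elementary tensor of two vectors in `ℂ^d`. -/
def tensorVec {d : ℕ} (v w : Fin d → ℂ) : Fin d × Fin d → ℂ := fun p => v p.1 * w p.2

/-- Outer product `|v⟩⟨w|`. -/
def outer {n : Type*} (v w : n → ℂ) : Matrix n n ℂ := Matrix.vecMulVec v (star w)

/-- Conjugate (mutually unbiased) basis vectors `â_α`. -/
def ahat (d : ℕ) (phi : Fin d → Fin d → ℝ) (α : Fin d) : Fin d → ℂ :=
  fun j => ((1 / Real.sqrt d : ℝ) : ℂ) * Complex.exp (Complex.I * (phi j α : ℂ))

/-- The unit vectors `ψ_α = Σ_j √λ_j e^{-iφ(j,α)} e_j`. -/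
def psiAlpha (d : ℕ) (lam : Fin d → ℝ) (phi : Fin d → Fin d → ℝ) (α : Fin d) : Fin d → ℂ :=
  fun j => ((Real.sqrt (lam j) : ℝ) : ℂ) * Complex.exp (-Complex.I * (phi j α : ℂ))

/-- The Schmidt-form state `ψ = Σ_j √λ_j e_j ⊗ e_j` in `ℂ^d ⊗ ℂ^d`. -/
def psiVec (d : ℕ) (lam : Fin d → ℝ) : Fin d × Fin d → ℂ :=
  ∑ j, ((Real.sqrt (lam j) : ℝ) : ℂ) • tensorVec (eVec d j) (eVec d j)

/-- The projector `P = Σ_j |e_j⟩⟨e_j| ⊗ |e_j⟩⟨e_j|`. -/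
def Pop (d : ℕ) : Matrix (Fin d × Fin d) (Fin d × Fin d) ℂ :=
  ∑ j, (outer (eVec d j) (eVec d j)) ⊗ₖ (outer (eVec d j) (eVec d j))

/-- The projector `Q = Σ_α |â_α⟩⟨â_α| ⊗ |ψ_α⟩⟨ψ_α|`. -/
def Qop (d : ℕ) (lam : Fin d → ℝ) (phi : Fin d → Fin d → ℝ) :
    Matrix (Fin d × Fin d) (Fin d × Fin d) ℂ :=
  ∑ α, (outer (ahat d phi α) (ahat d phi α)) ⊗ₖ
      (outer (psiAlpha d lam phi α) (psiAlpha d lam phi α))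

/-- The map `id ⊗ T` on operators on `ℂ^d ⊗ ℂ^d`, acting as the identity on the
first tensor factor and as `T` on the second; on product operators it satisfies
`(id ⊗ T)(A ⊗ B) = A ⊗ T(B)`. -/
def idTensor {d : ℕ} (T : Matrix (Fin d) (Fin d) ℂ →ₗ[ℂ] Matrix (Fin d) (Fin d) ℂ)
    (M : Matrix (Fin d × Fin d) (Fin d × Fin d) ℂ) :
    Matrix (Fin d × Fin d) (Fin d × Fin d) ℂ :=
  Matrix.of fun p q => T (Matrix.of fun k l => M (p.1, k) (q.1, l)) p.2 q.2

-- auxiliary lemmas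

lemma trace_mul_eq_sum {n : Type*} [Fintype n] (M N : Matrix n n ℂ) :
    (M * N).trace = ∑ p, ∑ q, M p q * N q p := by
  simp [Matrix.trace, Matrix.mul_apply, Matrix.diag]

lemma outer_eq_sum {d : ℕ} (v w : Fin d → ℂ) :
    outer v w = ∑ j, ∑ j', (v j * (starRingEnd ℂ) (w j')) • Matrix.single j j' (1:ℂ) := by
  ext k l
  simp [outer, Matrix.vecMulVec_apply, Matrix.sum_apply, Matrix.single,
    Finset.sum_ite_eq, mul_ite, ite_and]

lemma outer_apply {n : Type*} (v w : n → ℂ) (i j : n) :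
    outer v w i j = v i * (starRingEnd ℂ) (w j) := by
  simp [outer, Matrix.vecMulVec_apply]

lemma key (d : ℕ) (lam : Fin d → ℝ) (phi : Fin d → Fin d → ℝ) (α j j' : Fin d) :
    ((Real.sqrt (lam j) : ℂ)) * ((Real.sqrt (lam j') : ℂ)) *
      (ahat d phi α j' * (starRingEnd ℂ) (ahat d phi α j)) =
    (1 / (d : ℂ)) * (psiAlpha d lam phi α j * (starRingEnd ℂ) (psiAlpha d lam phi α j')) := by
  unfold ahat psiAlpha
  have h1 : ∀ t : ℝ, (starRingEnd ℂ) (Complex.exp (Complex.I * t)) = Complex.exp (-Complex.I * t) := by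
    intro t; rw [← Complex.exp_conj]; congr 1
    simp [Complex.ext_iff]
  have h2 : ∀ t : ℝ, (starRingEnd ℂ) (Complex.exp (-Complex.I * t)) = Complex.exp (Complex.I * t) := by
    intro t; rw [← Complex.exp_conj]; congr 1
    simp [Complex.ext_iff]
  have hd' : ((1 / Real.sqrt d : ℝ) : ℂ) * ((1 / Real.sqrt d : ℝ) : ℂ) = 1 / (d : ℂ) := by
    rw [← Complex.ofReal_mul, div_mul_div_comm, one_mul,
      Real.mul_self_sqrt (Nat.cast_nonneg d)]
    push_cast; ring
  simp only [_root_.map_mul, Complex.conj_ofReal, h1, h2]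
  rw [← hd']
  ring

lemma psiVec_apply (d : ℕ) (lam : Fin d → ℝ) (p : Fin d × Fin d) :
    psiVec d lam p = if p.2 = p.1 then ((Real.sqrt (lam p.1) : ℝ) : ℂ) else 0 := by
  simp only [psiVec, Finset.sum_apply, Pi.smul_apply, tensorVec, eVec, smul_eq_mul,
    mul_ite, ite_and, mul_one, mul_zero]
  rcases eq_or_ne p.1 p.2 with h | h
  · simp [h, Finset.sum_ite_eq]
  · simp [Finset.sum_ite_eq, h, Ne.symm h]

lemma rho_entry (d : ℕ) (lam : Fin d → ℝ)
    (T : Matrix (Fin d) (Fin d) ℂ →ₗ[ℂ] Matrix (Fin d) (Fin d) ℂ)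
    (p q : Fin d × Fin d) :
    idTensor T (outer (psiVec d lam) (psiVec d lam)) p q =
      ((Real.sqrt (lam p.1) : ℂ) * (Real.sqrt (lam q.1) : ℂ)) *
        T (Matrix.single p.1 q.1 (1:ℂ)) p.2 q.2 := by
  have hM : (Matrix.of fun k l => outer (psiVec d lam) (psiVec d lam) (p.1, k) (q.1, l))
      = ((Real.sqrt (lam p.1) : ℂ) * (Real.sqrt (lam q.1) : ℂ)) •
          Matrix.single p.1 q.1 (1:ℂ) := by
    ext k l
    simp only [Matrix.of_apply, outer, Matrix.vecMulVec_apply, Pi.star_apply,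
      psiVec_apply, Matrix.smul_apply, Matrix.single, smul_eq_mul]
    by_cases hk : k = p.1 <;> by_cases hl : l = q.1 <;>
      simp [hk, hl, eq_comm, Complex.conj_ofReal, mul_comm]
  unfold idTensor
  simp only [Matrix.of_apply]
  rw [hM, _root_.map_smul]
  simp


lemma pull3 {β γ : Type*} [Fintype β] [Fintype γ] (f : β → β → γ → ℂ) :
    (∑ p, ∑ q, ∑ α, f p q α) = ∑ α, ∑ p, ∑ q, f p q α := by
  have h : ∀ p : β, (∑ q, ∑ α, f p q α) = ∑ α, ∑ q, f p q α := fun _ => Finset.sum_comm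
  simp_rw [h]
  exact Finset.sum_comm

lemma foursum {d : ℕ} (f : Fin d → Fin d → Fin d → Fin d → ℂ) :
    (∑ p : Fin d × Fin d, ∑ q : Fin d × Fin d, f p.1 p.2 q.1 q.2)
      = ∑ j, ∑ j', ∑ a, ∑ b, f j a j' b := by
  simp only [Fintype.sum_prod_type]
  refine Finset.sum_congr rfl fun j _ => ?_
  exact Finset.sum_comm

/-- with `ρ = (id ⊗ T)(|ψ⟩⟨ψ|)`,
`tr(ρQ) = (1/d) Σ_α tr(T(|ψ_α⟩⟨ψ_α|)|ψ_α⟩⟨ψ_α|)`. -/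
theorem stmt9 (d : ℕ) (hd : 1 ≤ d) (lam : Fin d → ℝ)
    (hlam : ∀ j, 0 ≤ lam j) (hsum : ∑ j, lam j = 1)
    (phi : Fin d → Fin d → ℝ)
    (hMUB : ∀ α β : Fin d,
      star (ahat d phi α) ⬝ᵥ ahat d phi β = if α = β then 1 else 0)
    (T : Matrix (Fin d) (Fin d) ℂ →ₗ[ℂ] Matrix (Fin d) (Fin d) ℂ) :
    (idTensor T (outer (psiVec d lam) (psiVec d lam)) * Qop d lam phi).trace =
      (1 / (d : ℂ)) * ∑ α,
        (T (outer (psiAlpha d lam phi α) (psiAlpha d lam phi α)) *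
          outer (psiAlpha d lam phi α) (psiAlpha d lam phi α)).trace := by
  have hRHS : ∀ α : Fin d,
      (T (outer (psiAlpha d lam phi α) (psiAlpha d lam phi α)) *
        outer (psiAlpha d lam phi α) (psiAlpha d lam phi α)).trace =
      ∑ j, ∑ j', (psiAlpha d lam phi α j * (starRingEnd ℂ) (psiAlpha d lam phi α j')) *
        (T (Matrix.single j j' (1:ℂ)) *
          outer (psiAlpha d lam phi α) (psiAlpha d lam phi α)).trace := by
    intro α
    have hT : T (outer (psiAlpha d lam phi α) (psiAlpha d lam phi α)) =
        ∑ j, ∑ j', (psiAlpha d lam phi α j * (starRingEnd ℂ) (psiAlpha d lam phi α j')) •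
          T (Matrix.single j j' (1:ℂ)) := by
      conv_lhs => rw [outer_eq_sum (psiAlpha d lam phi α) (psiAlpha d lam phi α)]
      simp only [map_sum, _root_.map_smul]
    rw [hT, Finset.sum_mul, Matrix.trace_sum]
    refine Finset.sum_congr rfl fun j _ => ?_
    rw [Finset.sum_mul, Matrix.trace_sum]
    refine Finset.sum_congr rfl fun j' _ => ?_
    rw [smul_mul_assoc, Matrix.trace_smul, smul_eq_mul]
  rw [trace_mul_eq_sum]
  simp only [rho_entry, Qop, Matrix.sum_apply, Matrix.kroneckerMap_apply, outer_apply]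
  simp only [Finset.mul_sum]
  rw [pull3]
  refine Finset.sum_congr rfl fun α _ => ?_
  rw [hRHS α]
  simp only [trace_mul_eq_sum, outer_apply, Finset.mul_sum]
  rw [foursum (fun j a j' b =>
    ((Real.sqrt (lam j) : ℂ) * (Real.sqrt (lam j') : ℂ) *
        T (Matrix.single j j' (1:ℂ)) a b *
      (ahat d phi α j' * (starRingEnd ℂ) (ahat d phi α j) *
        (psiAlpha d lam phi α b * (starRingEnd ℂ) (psiAlpha d lam phi α a)))))]
  refine Finset.sum_congr rfl fun j _ => ?_
  refine Finset.sum_congr rfl fun j' _ => ?_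
  refine Finset.sum_congr rfl fun a _ => ?_
  refine Finset.sum_congr rfl fun b _ => ?_
  linear_combination (T (Matrix.single j j' (1:ℂ)) a b *
    (psiAlpha d lam phi α b * (starRingEnd ℂ) (psiAlpha d lam phi α a))) *
    key d lam phi α j j'
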